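/- arXiv:math/0608276 — 3 statements merged into one kernel-verified Lean document; each statement's English description precedes it below -/
import Mathlib

section
/- Let Φ be a root system with Weyl group W, and let S ⊆ Φ⁺. Then S = I(w) for some w ∈ W if and only if S is biconvex: for every rank-two subsystem Φ' ⊆ Φ with its induced positive roots ordered as a chain (η, η+γ, γ) in type A₂ or (η, η+γ, η+2γ, γ) in type B₂ (with η,γ the simple roots of Φ' and γ the shorter one), S ∩ Φ'⁺ is either an initial or a final segment of this ordering. -/
/-- `S` is an initial or final segment of the chain recorded by the list `l`. -/
def IsSeg {V : Type*} (l : List V) (S : Set V) : Prop :=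
  ∃ k ≤ l.length,
    S ∩ {x | x ∈ l} = {x | x ∈ l.take k} ∨ S ∩ {x | x ∈ l} = {x | x ∈ l.drop k}

/-- A reflection in the root `α` preserving the root system `Φ`. -/
def IsRootReflection {V : Type*} [AddCommGroup V] [Module ℝ V]
    (Φ : Set V) (α : V) (g : V ≃ₗ[ℝ] V) : Prop :=
  (∃ f : V →ₗ[ℝ] ℝ, f α = 2 ∧ ∀ v, g v = v - f v • α) ∧ ∀ β ∈ Φ, g β ∈ Φ

/-! A Weyl group element `w` preserves `Φ = Pos ∪ -Pos`, and a linear functional `f` that is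
positive on `Pos` shows that its inversion set is biconvex: closed under sums inside `Pos`, and
containing a summand of each of its elements that is a sum of two positive roots. On an `A₂` or
`B₂` chain biconvexity is exactly the initial-or-final-segment condition, and conversely the
segment condition gives biconvexity because, by the rank-two classification, every relation
`β + γ = δ` in `Pos` is a step of one of these chains.

A biconvex `S` is realised by induction on `|S|`. A root `α ∈ S` with `f α` minimal is
indecomposable, so inside the rank-two subsystem through `α` and any `β ∈ Pos` it is a simple root;
hence `s_α β = β - c α` stays positive for `β ≠ α`. Then `s_α (S \ {α})` is biconvex and smaller,
equal to `I(w)` by induction, and `I(w s_α) = {α} ∪ s_α I(w) = S`.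

All rank-two configurations are checked in coordinates: a linear map `V → ℝ × ℝ` sending the
simple roots `η, γ` to the standard basis turns each of them into arithmetic. -/

open Pointwise Module

namespace RootInversion

section Segments

variable {ι : Type*} {S : Set ι} {a b c d : ι}

theorem isSeg_iff {l : List ι} : IsSeg l S ↔ ∃ k ≤ l.length,
    (∀ x ∈ l, x ∈ S ↔ x ∈ l.take k) ∨ (∀ x ∈ l, x ∈ S ↔ x ∈ l.drop k) := by
  have hmem : ∀ l' : List ι, l' ⊆ l →
      (S ∩ {x | x ∈ l} = {x | x ∈ l'} ↔ ∀ x ∈ l, x ∈ S ↔ x ∈ l') := fun l' hl' => by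
    simp only [Set.ext_iff, Set.mem_inter_iff, Set.mem_ofPred_eq]
    refine ⟨fun h x hx => by simpa [hx] using h x, fun h x => ?_⟩
    by_cases hx : x ∈ l
    · simp [hx, h x hx]
    · exact iff_of_false (fun h' => hx h'.2) (fun h' => hx (hl' h'))
  simp only [IsSeg, hmem _ (List.take_subset _ _), hmem _ (List.drop_subset _ _)]

theorem isSeg_three_iff (h : [a, b, c].Nodup) :
    IsSeg [a, b, c] S ↔ (a ∈ S → c ∈ S → b ∈ S) ∧ (b ∈ S → a ∈ S ∨ c ∈ S) := by
  simp only [List.nodup_cons, List.mem_cons, List.not_mem_nil] at h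
  rw [isSeg_iff]
  constructor
  · rintro ⟨k, hk, h' | h'⟩ <;> simp only [List.length_cons, List.length_nil] at hk <;>
      interval_cases k <;> simp at h' <;> simp_all [eq_comm]
  · rintro ⟨h1, h2⟩
    by_cases ha : a ∈ S <;> by_cases hb : b ∈ S <;> by_cases hc : c ∈ S <;>
      first
      | (refine ⟨0, by simp, ?_⟩; simp_all [or_imp, forall_and, eq_comm]; done)
      | (refine ⟨1, by simp, ?_⟩; simp_all [or_imp, forall_and, eq_comm]; done)
      | (refine ⟨2, by simp, ?_⟩; simp_all [or_imp, forall_and, eq_comm])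

theorem isSeg_four_iff (h : [a, b, c, d].Nodup) :
    IsSeg [a, b, c, d] S ↔ (a ∈ S → d ∈ S → b ∈ S) ∧ (b ∈ S → a ∈ S ∨ d ∈ S) ∧
      (b ∈ S → d ∈ S → c ∈ S) ∧ (c ∈ S → b ∈ S ∨ d ∈ S) := by
  simp only [List.nodup_cons, List.mem_cons, List.not_mem_nil] at h
  rw [isSeg_iff]
  constructor
  · rintro ⟨k, hk, h' | h'⟩ <;> simp only [List.length_cons, List.length_nil] at hk <;>
      interval_cases k <;> simp at h' <;> simp_all [eq_comm]
  · rintro ⟨h1, h2, h3, h4⟩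
    by_cases ha : a ∈ S <;> by_cases hb : b ∈ S <;> by_cases hc : c ∈ S <;> by_cases hd : d ∈ S <;>
      first
      | (refine ⟨0, by simp, ?_⟩; simp_all [or_imp, forall_and, eq_comm]; done)
      | (refine ⟨1, by simp, ?_⟩; simp_all [or_imp, forall_and, eq_comm]; done)
      | (refine ⟨2, by simp, ?_⟩; simp_all [or_imp, forall_and, eq_comm]; done)
      | (refine ⟨3, by simp, ?_⟩; simp_all [or_imp, forall_and, eq_comm])

end Segments

section Biconvex

variable {V : Type*} [AddCommGroup V]

def ConvexPair (S : Set V) (β γ : V) : Prop :=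
  (β ∈ S → γ ∈ S → β + γ ∈ S) ∧ (β + γ ∈ S → β ∈ S ∨ γ ∈ S)

theorem ConvexPair.symm {S : Set V} {β γ : V} (h : ConvexPair S β γ) : ConvexPair S γ β := by
  unfold ConvexPair at *
  rw [add_comm, or_comm]
  exact ⟨fun hγ hβ => h.1 hβ hγ, h.2⟩

def IsBiconvex (Pos S : Set V) : Prop :=
  ∀ β ∈ Pos, ∀ γ ∈ Pos, β + γ ∈ Pos → ConvexPair S β γ

def IsIndecomposable (Pos : Set V) (α : V) : Prop :=
  ∀ x ∈ Pos, ∀ y ∈ Pos, x + y ≠ α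

theorem mem_iff_of_eq_union {Pos Φ : Set V} (hΦ : Φ = Pos ∪ (fun x => -x) '' Pos) {x : V} :
    x ∈ Φ ↔ x ∈ Pos ∨ -x ∈ Pos := by
  simp [hΦ]

end Biconvex

variable {V : Type*} [AddCommGroup V] [Module ℝ V]

section Chains

variable {η γ : V}

theorem exists_linearMap_prod_of_linearIndependent (h : LinearIndependent ℝ ![η, γ]) :
    ∃ g : V →ₗ[ℝ] ℝ × ℝ, g η = (1, 0) ∧ g γ = (0, 1) := by
  let e : ℝ × ℝ →ₗ[ℝ] V :=
    (LinearMap.toSpanSingleton ℝ V η).coprod (LinearMap.toSpanSingleton ℝ V γ)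
  have he : LinearMap.ker e = ⊥ := by
    refine LinearMap.ker_eq_bot'.2 fun p hp => ?_
    obtain ⟨h1, h2⟩ := LinearIndependent.pair_iff.1 h p.1 p.2 (by simpa [e] using hp)
    exact Prod.ext h1 h2
  obtain ⟨g, hg⟩ := e.exists_leftInverse_of_injective he
  refine ⟨g, ?_, ?_⟩
  · simpa [e] using LinearMap.congr_fun hg (1, 0)
  · simpa [e] using LinearMap.congr_fun hg (0, 1)

theorem nodup_B2_chain (h : LinearIndependent ℝ ![η, γ]) :
    [η, η + γ, η + (2 : ℝ) • γ, γ].Nodup := by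
  obtain ⟨g, hη, hγ⟩ := exists_linearMap_prod_of_linearIndependent h
  refine List.Nodup.of_map g ?_
  norm_num [hη, hγ]

theorem nodup_A2_chain (h : LinearIndependent ℝ ![η, γ]) : [η, η + γ, γ].Nodup :=
  (nodup_B2_chain h).sublist (by simp)

theorem A2_chain_subset_B2_chain :
    ({η, η + γ, γ} : Set V) ⊆ {η, η + γ, η + (2 : ℝ) • γ, γ} :=
  Set.insert_subset_insert (Set.insert_subset_insert (Set.subset_insert _ _))

theorem B2_chain_subset_span :
    ({η, η + γ, η + (2 : ℝ) • γ, γ} : Set V) ⊆ Submodule.span ℝ {η, γ} := by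
  have hη : η ∈ Submodule.span ℝ {η, γ} := Submodule.subset_span (by simp)
  have hγ : γ ∈ Submodule.span ℝ {η, γ} := Submodule.subset_span (by simp)
  simp only [Set.insert_subset_iff, Set.singleton_subset_iff, SetLike.mem_coe]
  exact ⟨hη, add_mem hη hγ, add_mem hη (Submodule.smul_mem _ _ hγ), hγ⟩

theorem eq_of_add_mem_A2_chain (h : LinearIndependent ℝ ![η, γ]) {x y : V}
    (hx : x ∈ ({η, η + γ, γ} : Set V)) (hy : y ∈ ({η, η + γ, γ} : Set V))
    (hxy : x + y ∈ ({η, η + γ, γ} : Set V)) :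
    (x = η ∧ y = γ) ∨ (x = γ ∧ y = η) := by
  obtain ⟨g, hη, hγ⟩ := exists_linearMap_prod_of_linearIndependent h
  replace hxy := Set.mem_image_of_mem g hxy
  rcases hx with rfl | rfl | rfl <;> rcases hy with rfl | rfl | rfl <;>
    first | (simp; done) | (exfalso; norm_num [hη, hγ] at hxy)

theorem eq_of_add_mem_B2_chain (h : LinearIndependent ℝ ![η, γ]) {x y : V}
    (hx : x ∈ ({η, η + γ, η + (2 : ℝ) • γ, γ} : Set V))
    (hy : y ∈ ({η, η + γ, η + (2 : ℝ) • γ, γ} : Set V))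
    (hxy : x + y ∈ ({η, η + γ, η + (2 : ℝ) • γ, γ} : Set V)) :
    (x = η ∧ y = γ) ∨ (x = γ ∧ y = η) ∨ (x = η + γ ∧ y = γ) ∨ (x = γ ∧ y = η + γ) := by
  obtain ⟨g, hη, hγ⟩ := exists_linearMap_prod_of_linearIndependent h
  replace hxy := Set.mem_image_of_mem g hxy
  rcases hx with rfl | rfl | rfl | rfl <;> rcases hy with rfl | rfl | rfl | rfl <;>
    first | (simp; done) | (exfalso; norm_num [hη, hγ] at hxy)

theorem smul_sub_notMem_B2_chain (h : LinearIndependent ℝ ![η, γ]) {α β : V}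
    (hα : α = η ∨ α = γ) (hβ : β ∈ ({η, η + γ, η + (2 : ℝ) • γ, γ} : Set V)) (hβα : β ≠ α)
    (c : ℝ) : c • α - β ∉ ({η, η + γ, η + (2 : ℝ) • γ, γ} : Set V) := by
  obtain ⟨g, hη, hγ⟩ := exists_linearMap_prod_of_linearIndependent h
  intro hc
  replace hc := Set.mem_image_of_mem g hc
  rcases hα with rfl | rfl <;> rcases hβ with rfl | rfl | rfl | rfl <;>
    first | exact hβα rfl | norm_num [hη, hγ] at hc

variable {S : Set V}

theorem isSeg_A2_chain_iff (h : LinearIndependent ℝ ![η, γ]) :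
    IsSeg [η, η + γ, γ] S ↔ ConvexPair S η γ := by
  rw [isSeg_three_iff (nodup_A2_chain h), ConvexPair]

theorem isSeg_B2_chain_iff (h : LinearIndependent ℝ ![η, γ]) :
    IsSeg [η, η + γ, η + (2 : ℝ) • γ, γ] S ↔ ConvexPair S η γ ∧ ConvexPair S (η + γ) γ := by
  rw [isSeg_four_iff (nodup_B2_chain h), ConvexPair, ConvexPair, add_assoc, ← two_smul ℝ γ]
  tauto

end Chains

def IsReduced (Pos : Set V) : Prop :=
  ∀ α ∈ Pos, ∀ r : ℝ, r • α ∈ Pos → r = 1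

def RankTwoChains (Pos : Set V) : Prop :=
  ∀ a ∈ Pos, ∀ b ∈ Pos, a ≠ b → ∃ η γ : V,
    Pos ∩ (Submodule.span ℝ {a, b} : Set V) = {η, γ} ∨
    Pos ∩ (Submodule.span ℝ {a, b} : Set V) = {η, η + γ, γ} ∨
    Pos ∩ (Submodule.span ℝ {a, b} : Set V) = {η, η + γ, η + (2 : ℝ) • γ, γ}

def inversionSet (Pos : Set V) (w : V ≃ₗ[ℝ] V) : Set V :=
  {α | α ∈ Pos ∧ -(w α) ∈ Pos}

abbrev weylGroup (Φ : Set V) : Subgroup (V ≃ₗ[ℝ] V) :=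
  Subgroup.closure {g | ∃ α ∈ Φ, IsRootReflection Φ α g}

variable {Pos Φ S : Set V} {α β γ η : V}

section Reduced

theorem IsReduced.zero_notMem (h : IsReduced Pos) : (0 : V) ∉ Pos := fun h0 => by
  have := h 0 h0 2 (by rwa [smul_zero])
  norm_num at this

theorem IsReduced.ne_of_add_mem (h : IsReduced Pos) (hβ : β ∈ Pos) (hβγ : β + γ ∈ Pos) :
    β ≠ γ := by
  rintro rfl
  have := h β hβ 2 (by rwa [two_smul])
  norm_num at this

theorem IsReduced.linearIndependent (h : IsReduced Pos) (hη : η ∈ Pos) (hγ : γ ∈ Pos)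
    (hne : η ≠ γ) : LinearIndependent ℝ ![η, γ] := by
  refine (LinearIndependent.pair_iff' fun h0 => h.zero_notMem (h0 ▸ hη)).2 fun r hr => ?_
  rw [← hr, h η hη r (hr ▸ hγ), one_smul] at hne
  exact hne rfl

theorem IsReduced.linearIndependent_of_add_mem (h : IsReduced Pos) (hη : η ∈ Pos)
    (hγ : γ ∈ Pos) (hηγ : η + γ ∈ Pos) : LinearIndependent ℝ ![η, γ] :=
  h.linearIndependent hη hγ (h.ne_of_add_mem hη hηγ)

theorem IsReduced.inter_span_eq_of_chain (h : IsReduced Pos) {a b : V} {C : Set V}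
    (ha : a ∈ Pos) (hb : b ∈ Pos) (hc : Pos ∩ (Submodule.span ℝ {a, b} : Set V) = C)
    (hA2 : {η, η + γ, γ} ⊆ C) (hB2 : C ⊆ {η, η + γ, η + (2 : ℝ) • γ, γ}) :
    LinearIndependent ℝ ![η, γ] ∧ Pos ∩ (Submodule.span ℝ {η, γ} : Set V) = C := by
  have hC : ∀ x ∈ C, x ∈ Pos ∧ x ∈ Submodule.span ℝ {a, b} := fun x hx => hc.symm.subset hx
  have hmem : ∀ x ∈ Pos, x ∈ Submodule.span ℝ {a, b} → x ∈ Submodule.span ℝ {η, γ} :=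
    fun x hx hxs => B2_chain_subset_span (hB2 (hc.subset ⟨hx, hxs⟩))
  refine ⟨h.linearIndependent_of_add_mem (hC η (hA2 (by simp))).1 (hC γ (hA2 (by simp))).1
    (hC _ (hA2 (by simp))).1, ?_⟩
  rw [Submodule.span_eq_span (t := {a, b}) ?_ ?_, hc]
  · simp only [Set.insert_subset_iff, Set.singleton_subset_iff]
    exact ⟨(hC η (hA2 (by simp))).2, (hC γ (hA2 (by simp))).2⟩
  · simp only [Set.insert_subset_iff, Set.singleton_subset_iff]
    exact ⟨hmem a ha (Submodule.subset_span (by simp)), hmem b hb (Submodule.subset_span (by simp))⟩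

end Reduced

section SegmentCondition

theorem isSeg_of_isBiconvex (hred : IsReduced Pos) (hS : IsBiconvex Pos S) (η γ : V) :
    (Pos ∩ (Submodule.span ℝ {η, γ} : Set V) = {η, η + γ, γ} → IsSeg [η, η + γ, γ] S) ∧
      (Pos ∩ (Submodule.span ℝ {η, γ} : Set V) = {η, η + γ, η + (2 : ℝ) • γ, γ} →
        IsSeg [η, η + γ, η + (2 : ℝ) • γ, γ] S) := by
  have hpos : ∀ {C : Set V}, Pos ∩ (Submodule.span ℝ {η, γ} : Set V) = C → ∀ x ∈ C, x ∈ Pos :=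
    fun hc x hx => (hc.symm.subset hx).1
  constructor
  · intro hc
    have hη := hpos hc η (by simp)
    have hγ := hpos hc γ (by simp)
    have hηγ := hpos hc (η + γ) (by simp)
    rw [isSeg_A2_chain_iff (hred.linearIndependent_of_add_mem hη hγ hηγ)]
    exact hS η hη γ hγ hηγ
  · intro hc
    have hη := hpos hc η (by simp)
    have hγ := hpos hc γ (by simp)
    have hηγ := hpos hc (η + γ) (by simp)
    have hηγγ : η + γ + γ ∈ Pos := by
      rw [add_assoc, ← two_smul ℝ]
      exact hpos hc _ (by simp)
    rw [isSeg_B2_chain_iff (hred.linearIndependent_of_add_mem hη hγ hηγ)]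
    exact ⟨hS η hη γ hγ hηγ, hS _ hηγ γ hγ hηγγ⟩

theorem isBiconvex_of_isSeg (hred : IsReduced Pos) (hrank2 : RankTwoChains Pos)
    (hseg : ∀ η γ : V,
      (Pos ∩ (Submodule.span ℝ {η, γ} : Set V) = {η, η + γ, γ} → IsSeg [η, η + γ, γ] S) ∧
      (Pos ∩ (Submodule.span ℝ {η, γ} : Set V) = {η, η + γ, η + (2 : ℝ) • γ, γ} →
        IsSeg [η, η + γ, η + (2 : ℝ) • γ, γ] S)) :
    IsBiconvex Pos S := by
  intro β hβ γ hγ hβγ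
  have hspan : ({β, γ, β + γ} : Set V) ⊆ Submodule.span ℝ {β, γ} := by
    have hβ : β ∈ Submodule.span ℝ {β, γ} := Submodule.subset_span (by simp)
    have hγ : γ ∈ Submodule.span ℝ {β, γ} := Submodule.subset_span (by simp)
    simpa [Set.insert_subset_iff] using ⟨hβ, hγ, add_mem hβ hγ⟩
  have hne := hred.ne_of_add_mem hβ hβγ
  obtain ⟨η, γ₀, hc | hc | hc⟩ := hrank2 β hβ γ hγ hne
  all_goals
    have hβ' := hc.subset ⟨hβ, hspan (by simp)⟩
    have hγ' := hc.subset ⟨hγ, hspan (by simp)⟩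
    have hβγ' := hc.subset ⟨hβγ, hspan (by simp)⟩
  · -- `β`, `γ`, `β + γ` would be three distinct elements of a two-element set
    have h1 : β + γ ≠ β := fun h => hred.zero_notMem (add_eq_left.1 h ▸ hγ)
    have h2 : β + γ ≠ γ := fun h => hred.zero_notMem (add_eq_right.1 h ▸ hβ)
    rcases hβ' with rfl | rfl <;> rcases hγ' with rfl | rfl <;> simp_all
  · obtain ⟨hind, hc⟩ := hred.inter_span_eq_of_chain hβ hγ hc subset_rfl A2_chain_subset_B2_chain
    have h := (isSeg_A2_chain_iff hind).1 ((hseg η γ₀).1 hc)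
    rcases eq_of_add_mem_A2_chain hind hβ' hγ' hβγ' with ⟨rfl, rfl⟩ | ⟨rfl, rfl⟩
    exacts [h, h.symm]
  · obtain ⟨hind, hc⟩ := hred.inter_span_eq_of_chain hβ hγ hc A2_chain_subset_B2_chain subset_rfl
    have h := (isSeg_B2_chain_iff hind).1 ((hseg η γ₀).2 hc)
    rcases eq_of_add_mem_B2_chain hind hβ' hγ' hβγ' with
      ⟨rfl, rfl⟩ | ⟨rfl, rfl⟩ | ⟨rfl, rfl⟩ | ⟨rfl, rfl⟩
    exacts [h.1, h.1.symm, h.2, h.2.symm]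

end SegmentCondition

section WeylGroup

theorem _root_.IsRootReflection.exists_eq_reflection {g : V ≃ₗ[ℝ] V}
    (h : IsRootReflection Φ α g) : ∃ (f : Dual ℝ V) (hf : f α = 2), g = reflection hf := by
  obtain ⟨⟨f, hf, hg⟩, -⟩ := h
  exact ⟨f, hf, LinearEquiv.ext fun v => (hg v).trans (reflection_apply (y := v) hf).symm⟩

theorem weylGroup_le_stabilizer (Φ : Set V) :
    weylGroup Φ ≤ MulAction.stabilizer (V ≃ₗ[ℝ] V) Φ := by
  refine Subgroup.closure_le _ |>.2 ?_
  rintro g ⟨α, -, hg⟩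
  obtain ⟨f, hf, rfl⟩ := IsRootReflection.exists_eq_reflection hg
  exact (bijOn_reflection_of_mapsTo hf hg.2).image_eq

theorem apply_mem_of_mem_weylGroup {w : V ≃ₗ[ℝ] V} (hw : w ∈ weylGroup Φ) (hβ : β ∈ Φ) :
    w β ∈ Φ := by
  have : w • Φ = Φ := weylGroup_le_stabilizer Φ hw
  exact this ▸ Set.smul_mem_smul_set hβ

theorem isBiconvex_inversionSet {f : V →ₗ[ℝ] ℝ} (hf : ∀ α ∈ Pos, 0 < f α) {w : V ≃ₗ[ℝ] V}
    (hw : ∀ β ∈ Pos, w β ∈ Pos ∨ -(w β) ∈ Pos) : IsBiconvex Pos (inversionSet Pos w) := by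
  intro β hβ γ hγ hβγ
  refine ⟨fun ⟨_, hβ'⟩ ⟨_, hγ'⟩ => ⟨hβγ, ?_⟩, fun ⟨_, hβγ'⟩ => ?_⟩
  · refine (hw _ hβγ).resolve_left fun h => ?_
    have := hf _ h; have := hf _ hβ'; have := hf _ hγ'
    simp only [map_add, map_neg] at *
    linarith
  · by_contra! hn
    have hβ' := (hw β hβ).resolve_right fun h => hn.1 ⟨hβ, h⟩
    have hγ' := (hw γ hγ).resolve_right fun h => hn.2 ⟨hγ, h⟩
    have := hf _ hβγ'; have := hf _ hβ'; have := hf _ hγ'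
    simp only [map_add, map_neg] at *
    linarith

end WeylGroup

section Reflection

theorem IsReduced.smul_sub_notMem (hred : IsReduced Pos) (hrank2 : RankTwoChains Pos)
    (hα : α ∈ Pos) (hindec : IsIndecomposable Pos α) (hβ : β ∈ Pos) (hβα : β ≠ α) (c : ℝ) :
    c • α - β ∉ Pos := by
  intro hcβ
  have hspan : ({α, β, c • α - β} : Set V) ⊆ Submodule.span ℝ {α, β} := by
    have hα : α ∈ Submodule.span ℝ {α, β} := Submodule.subset_span (by simp)
    have hβ : β ∈ Submodule.span ℝ {α, β} := Submodule.subset_span (by simp)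
    simpa [Set.insert_subset_iff] using ⟨hα, hβ, sub_mem (Submodule.smul_mem _ c hα) hβ⟩
  obtain ⟨η, γ, hc | hc | hc⟩ := hrank2 α hα β hβ hβα.symm
  all_goals
    have hpos : ∀ x ∈ Pos ∩ (Submodule.span ℝ {α, β} : Set V), x ∈ Pos := fun x hx => hx.1
    rw [hc] at hpos
    have hα' := hc.subset ⟨hα, hspan (by simp)⟩
    have hβ' := hc.subset ⟨hβ, hspan (by simp)⟩
    have hcβ' := hc.subset ⟨hcβ, hspan (by simp)⟩
  -- in each case the indecomposable `α` is one of the two simple roots `η`, `γ`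
  · have hne : η ≠ γ := by
      rintro rfl
      simp only [Set.mem_insert_iff, Set.mem_singleton_iff, or_self] at hα' hβ'
      exact hβα (hβ'.trans hα'.symm)
    have hsub : ({η, γ} : Set V) ⊆ {η, η + γ, η + (2 : ℝ) • γ, γ} := by
      simp [Set.insert_subset_iff]
    exact smul_sub_notMem_B2_chain
      (hred.linearIndependent (hpos η (by simp)) (hpos γ (by simp)) hne)
      hα' (hsub hβ') hβα c (hsub hcβ')
  · have hind := hred.linearIndependent_of_add_mem (hpos η (by simp)) (hpos γ (by simp))
      (hpos _ (by simp))
    have hαs : α = η ∨ α = γ := by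
      rcases hα' with h | h | h
      exacts [.inl h, absurd h.symm (hindec _ (hpos η (by simp)) _ (hpos γ (by simp))), .inr h]
    exact smul_sub_notMem_B2_chain hind hαs (A2_chain_subset_B2_chain hβ') hβα c
      (A2_chain_subset_B2_chain hcβ')
  · have hind := hred.linearIndependent_of_add_mem (hpos η (by simp)) (hpos γ (by simp))
      (hpos _ (by simp))
    have hαs : α = η ∨ α = γ := by
      rcases hα' with h | h | h | h
      · exact .inl h
      · exact absurd h.symm (hindec _ (hpos η (by simp)) _ (hpos γ (by simp)))
      · refine absurd ?_ (hindec _ (hpos (η + γ) (by simp)) _ (hpos γ (by simp)))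
        rw [h, add_assoc, ← two_smul ℝ]
      · exact .inr h
    exact smul_sub_notMem_B2_chain hind hαs hβ' hβα c hcβ'

theorem mem_reflection_image_iff {φ : Dual ℝ V} (hφ : φ α = 2) {T : Set V} {x : V} :
    x ∈ reflection hφ '' T ↔ reflection hφ x ∈ T := by
  rw [LinearEquiv.image_eq_preimage_symm, Module.reflection_symm, Set.mem_preimage]

theorem reflection_ne_of_mem {f : V →ₗ[ℝ] ℝ} (hf : ∀ x ∈ Pos, 0 < f x) (hα : α ∈ Pos)
    {φ : Dual ℝ V} (hφ : φ α = 2) {x : V} (hx : x ∈ Pos) : reflection hφ x ≠ α := by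
  intro h
  have hxα : x = -α := by rw [← involutive_reflection hφ x, h, reflection_apply_self]
  have h1 := hf x hx
  have h2 := hf α hα
  rw [hxα, map_neg] at h1
  linarith

theorem reflection_mem_of_mem (hΦ : Φ = Pos ∪ (fun x => -x) '' Pos) (hred : IsReduced Pos)
    (hrank2 : RankTwoChains Pos) (hα : α ∈ Pos) (hindec : IsIndecomposable Pos α)
    {φ : Dual ℝ V} (hφ : φ α = 2) (hmaps : ∀ x ∈ Φ, reflection hφ x ∈ Φ) {x : V}
    (hx : x ∈ Pos) (hxα : x ≠ α) : reflection hφ x ∈ Pos := by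
  refine ((mem_iff_of_eq_union hΦ).1
    (hmaps x ((mem_iff_of_eq_union hΦ).2 (.inl hx)))).resolve_right ?_
  rw [Module.reflection_apply, neg_sub]
  exact hred.smul_sub_notMem hrank2 hα hindec hx hxα _

end Reflection

section Induction

theorem isIndecomposable_of_forall_le {f : V →ₗ[ℝ] ℝ} (hf : ∀ x ∈ Pos, 0 < f x)
    (hS : IsBiconvex Pos S) (hα : α ∈ Pos) (hαS : α ∈ S) (hmin : ∀ x ∈ S, f α ≤ f x) :
    IsIndecomposable Pos α := by
  rintro x hx y hy rfl
  have := hf x hx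
  have := hf y hy
  rcases (hS x hx y hy hα).2 hαS with h | h <;> have := hmin _ h <;>
    simp only [map_add] at this <;> linarith

theorem isBiconvex_reflection_image {f : V →ₗ[ℝ] ℝ} (hf : ∀ x ∈ Pos, 0 < f x)
    (hred : IsReduced Pos) (hSPos : S ⊆ Pos) (hS : IsBiconvex Pos S) (hαS : α ∈ S)
    (hindec : IsIndecomposable Pos α) {φ : Dual ℝ V} (hφ : φ α = 2)
    (hs : ∀ x ∈ Pos, x ≠ α → reflection hφ x ∈ Pos) :
    IsBiconvex Pos (reflection hφ '' (S \ {α})) := by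
  have hα := hSPos hαS
  have hsα : reflection hφ α = -α := reflection_apply_self hφ
  -- `s_α y = σ + α` for `σ = s_α (α + y)`, so closedness puts it in `S`
  have key : ∀ {x y : V}, y ∈ Pos → x + y ∈ Pos → x = α →
      reflection hφ x + reflection hφ y ∈ S \ {α} → reflection hφ y ∈ S \ {α} := by
    rintro x y hy hxy rfl ⟨hσS, hσα⟩
    have hσ := hSPos hσS
    have hsy : reflection hφ y = reflection hφ x + reflection hφ y + x := by rw [hsα]; abel
    have hsyPos := hs y hy (hred.ne_of_add_mem hα hxy).symm
    rw [hsy] at hsyPos ⊢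
    refine ⟨(hS _ hσ x hα hsyPos).1 hσS hαS, fun h => ?_⟩
    exact hred.zero_notMem (add_eq_right.1 h ▸ hσ)
  intro x hx y hy hxy
  simp only [ConvexPair, mem_reflection_image_iff hφ, map_add]
  constructor
  · rintro ⟨hxS, -⟩ ⟨hyS, -⟩
    refine ⟨(hS _ (hSPos hxS) _ (hSPos hyS) ?_).1 hxS hyS, hindec _ (hSPos hxS) _ (hSPos hyS)⟩
    rw [← map_add]
    refine hs _ hxy fun h => ?_
    have h' : reflection hφ x + reflection hφ y = -α := by rw [← map_add, h, hsα]
    have := congrArg f h'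
    have := hf _ (hSPos hxS); have := hf _ (hSPos hyS); have := hf α hα
    simp only [map_add, map_neg] at *
    linarith
  · intro hσ
    by_cases hxα : x = α
    · exact .inr (key hy hxy hxα hσ)
    by_cases hyα : y = α
    · rw [add_comm] at hxy hσ
      exact .inl (key hx hxy hyα hσ)
    refine ((hS _ (hs x hx hxα) _ (hs y hy hyα) (hSPos hσ.1)).2 hσ.1).imp
      (fun h => ⟨h, reflection_ne_of_mem hf hα hφ hx⟩)
      (fun h => ⟨h, reflection_ne_of_mem hf hα hφ hy⟩)

theorem inversionSet_mul_reflection {w : V ≃ₗ[ℝ] V} {φ : Dual ℝ V} (hφ : φ α = 2)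
    (hα : α ∈ Pos) (hs : ∀ x ∈ Pos, x ≠ α → reflection hφ x ∈ Pos)
    (hwα : w α ∈ Pos ∨ -(w α) ∈ Pos) (hαw : α ∉ inversionSet Pos w) :
    inversionSet Pos (w * reflection hφ) = insert α (reflection hφ '' inversionSet Pos w) := by
  ext x
  rw [Set.mem_insert_iff, mem_reflection_image_iff]
  by_cases hx : x = α
  · subst hx
    simpa [inversionSet, hα] using hwα.resolve_right fun h => hαw ⟨hα, h⟩
  simp only [hx, false_or, inversionSet, Set.mem_ofPred_eq, LinearEquiv.mul_apply]
  refine ⟨fun ⟨hxPos, h⟩ => ⟨hs x hxPos hx, h⟩, fun ⟨hsx, h⟩ => ⟨?_, h⟩⟩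
  have hsxα : reflection hφ x ≠ α := fun h' => hαw ⟨hα, h' ▸ h⟩
  simpa [involutive_reflection hφ x] using hs _ hsx hsxα

theorem exists_eq_inversionSet_of_isBiconvex (hΦ : Φ = Pos ∪ (fun x => -x) '' Pos)
    (hfin : Pos.Finite) (hdisj : ∀ α ∈ Pos, -α ∉ Pos) {f : V →ₗ[ℝ] ℝ}
    (hf : ∀ α ∈ Pos, 0 < f α) (hred : IsReduced Pos)
    (hrefl : ∀ α ∈ Φ, ∃ g : V ≃ₗ[ℝ] V, IsRootReflection Φ α g) (hrank2 : RankTwoChains Pos)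
    (hSPos : S ⊆ Pos) (hS : IsBiconvex Pos S) :
    ∃ w ∈ weylGroup Φ, S = inversionSet Pos w := by
  induction hn : S.ncard generalizing S with
  | zero =>
    rw [Set.ncard_eq_zero (hfin.subset hSPos)] at hn
    refine ⟨1, one_mem _, ?_⟩
    ext x
    simpa [hn, inversionSet] using hdisj x
  | succ n ih =>
    obtain ⟨α, hαS, hmin⟩ := S.exists_min_image f (hfin.subset hSPos)
      (Set.nonempty_of_ncard_ne_zero (by omega))
    have hα := hSPos hαS
    have hindec := isIndecomposable_of_forall_le hf hS hα hαS hmin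
    have hαΦ : α ∈ Φ := (mem_iff_of_eq_union hΦ).2 (.inl hα)
    obtain ⟨g, hg⟩ := hrefl α hαΦ
    obtain ⟨φ, hφ, rfl⟩ := hg.exists_eq_reflection
    have hs : ∀ x ∈ Pos, x ≠ α → reflection hφ x ∈ Pos := fun x hx hxα =>
      reflection_mem_of_mem hΦ hred hrank2 hα hindec hφ hg.2 hx hxα
    have hS'Pos : reflection hφ '' (S \ {α}) ⊆ Pos := by
      rintro _ ⟨x, hx, rfl⟩
      exact hs x (hSPos hx.1) hx.2
    have hcard : (reflection hφ '' (S \ {α})).ncard = n := by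
      rw [Set.ncard_image_of_injective _ (LinearEquiv.injective _),
        Set.ncard_sdiff_singleton_of_mem hαS, hn, Nat.add_sub_cancel]
    obtain ⟨w, hw, hS'⟩ :=
      ih hS'Pos (isBiconvex_reflection_image hf hred hSPos hS hαS hindec hφ hs) hcard
    refine ⟨w * reflection hφ, mul_mem hw (Subgroup.subset_closure ⟨α, hαΦ, hg⟩), ?_⟩
    have hαw : α ∉ inversionSet Pos w := by
      rw [← hS', mem_reflection_image_iff, reflection_apply_self]
      exact fun h => hdisj α hα (hSPos h.1)
    have hwα := (mem_iff_of_eq_union hΦ).1 (apply_mem_of_mem_weylGroup hw hαΦ)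
    rw [inversionSet_mul_reflection hφ hα hs hwα hαw, ← hS', Set.image_image,
      funext (involutive_reflection hφ), Set.image_id', Set.insert_sdiff_singleton,
      Set.insert_eq_of_mem hαS]

end Induction

end RootInversion

/-- Let `Φ = Pos ∪ (-Pos)` be a (reduced, finite) root system without `G₂`
subsystems -- every rank-two subsystem has positive part of type `A₁×A₁`, `A₂`
or `B₂` -- and let `W` be its Weyl group, the group generated by the reflections
in the roots.  A subset `S ⊆ Pos` is the inversion set
`I(w) = {α ∈ Pos : w α ∈ -Pos}` of some `w ∈ W` if and only if `S` is biconvex: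
for every rank-two subsystem with positive roots forming the chain
`(η, η+γ, γ)` (type `A₂`) or `(η, η+γ, η+2γ, γ)` (type `B₂`, `γ` the shorter
simple root), `S` meets it in an initial or final segment of the chain. -/
theorem stmt5 {V : Type*} [AddCommGroup V] [Module ℝ V]
    (Pos Φ : Set V) (hΦ : Φ = Pos ∪ (fun x => -x) '' Pos)
    (hfin : Pos.Finite)
    (hdisj : ∀ α ∈ Pos, -α ∉ Pos)
    (hpos : ∃ f : V →ₗ[ℝ] ℝ, ∀ α ∈ Pos, 0 < f α)
    (hred : ∀ α ∈ Pos, ∀ r : ℝ, r • α ∈ Pos → r = 1)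
    (hrefl : ∀ α ∈ Φ, ∃ g : V ≃ₗ[ℝ] V, IsRootReflection Φ α g)
    (hrank2 : ∀ a ∈ Pos, ∀ b ∈ Pos, a ≠ b → ∃ η γ : V,
        Pos ∩ (Submodule.span ℝ {a, b} : Set V) = {η, γ} ∨
        Pos ∩ (Submodule.span ℝ {a, b} : Set V) = {η, η + γ, γ} ∨
        Pos ∩ (Submodule.span ℝ {a, b} : Set V) = {η, η + γ, η + (2 : ℝ) • γ, γ})
    (S : Set V) (hS : S ⊆ Pos) :
    (∃ w ∈ Subgroup.closure {g : V ≃ₗ[ℝ] V | ∃ α ∈ Φ, IsRootReflection Φ α g},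
        S = {α | α ∈ Pos ∧ -(w α) ∈ Pos}) ↔
      (∀ η γ : V,
        (Pos ∩ (Submodule.span ℝ {η, γ} : Set V) = {η, η + γ, γ} →
          IsSeg [η, η + γ, γ] S) ∧
        (Pos ∩ (Submodule.span ℝ {η, γ} : Set V) = {η, η + γ, η + (2 : ℝ) • γ, γ} →
          IsSeg [η, η + γ, η + (2 : ℝ) • γ, γ] S)) := by
  obtain ⟨f, hf⟩ := hpos
  constructor
  · rintro ⟨w, hw, rfl⟩
    have hsign : ∀ β ∈ Pos, w β ∈ Pos ∨ -(w β) ∈ Pos := fun β hβ =>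
      (RootInversion.mem_iff_of_eq_union hΦ).1 (RootInversion.apply_mem_of_mem_weylGroup hw
        ((RootInversion.mem_iff_of_eq_union hΦ).2 (.inl hβ)))
    exact RootInversion.isSeg_of_isBiconvex hred (RootInversion.isBiconvex_inversionSet hf hsign)
  · intro hseg
    exact RootInversion.exists_eq_inversionSet_of_isBiconvex hΦ hfin hdisj hf hred hrefl hrank2 hS
      (RootInversion.isBiconvex_of_isSeg hred hrank2 hseg)
end

section
/- Let P be a finite poset and T a linear extension (standard filling) of a convex subset (skew shape) ν/λ of the lattice of lower ideals, meaning a bijection label : ν\λ → {1,…,|ν\λ|} with label(x) < label(y) whenever x < y. A single jeu de taquin slide into a box x (x maximal among elements below ν\λ not in ν\λ) produces again a standard filling of a skew shape: every intermediate assignment during the slide is order-preserving on its domain. -/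
/-- A jeu de taquin slide on a skew shape in a finite poset produces a standard
filling of a skew shape.  Here `nu \ lam` is a skew shape (difference of lower
order ideals `lam ⊆ nu`), `T` is a standard filling (injective, order
preserving, with label set `{1, …, m}` where `m = |nu \ lam|`), `x` is maximal
among elements not in `nu \ lam` lying below some element of `nu \ lam`, and
the slide path is `x = c 0 ⋖ c 1 ⋖ ⋯ ⋖ c k`, at each step moving into the hole
the smallest label among the covering boxes, stopping when no covering box of
`c k` is in `nu \ lam`.  Conclusion: for each stage `j ≤ k`, the intermediate
labeling (labels of `c (i+1)` moved to `c i` for `i < j`, hole at `c j`) is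
order preserving on its domain `((nu \ lam) ∪ {x}) \ {c j}`, and the final
domain is again a skew shape of the same cardinality. -/
theorem stmt13 {P : Type*} [PartialOrder P] [Fintype P]
    (lam nu : Set P) (hlam : IsLowerSet lam) (hnu : IsLowerSet nu)
    (hsub : lam ⊆ nu)
    (T : P → ℕ)
    (hmono : ∀ z ∈ nu \ lam, ∀ w ∈ nu \ lam, z < w → T z < T w)
    (hinj : Set.InjOn T (nu \ lam))
    (himg : T '' (nu \ lam) = Set.Icc 1 (nu \ lam).ncard)
    (x : P) (hx : x ∉ nu \ lam)
    (hxbelow : ∃ y ∈ nu \ lam, x < y)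
    (hxmax : ∀ z, x < z → z ∈ nu \ lam ∨ ¬∃ y ∈ nu \ lam, z < y)
    (k : ℕ) (c : ℕ → P) (hc0 : c 0 = x)
    (hstep : ∀ i < k, c (i + 1) ∈ nu \ lam ∧ c i ⋖ c (i + 1) ∧
        ∀ y ∈ nu \ lam, c i ⋖ y → T (c (i + 1)) ≤ T y)
    (hstop : ∀ y, c k ⋖ y → y ∉ nu \ lam) :
    ∀ j ≤ k, ∃ Tj : P → ℕ,
      (∀ i < j, Tj (c i) = T (c (i + 1))) ∧
      (∀ z, (∀ i < j, z ≠ c i) → Tj z = T z) ∧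
      (∀ z ∈ ((nu \ lam) ∪ {x}) \ {c j}, ∀ w ∈ ((nu \ lam) ∪ {x}) \ {c j},
          z < w → Tj z < Tj w) ∧
      (j = k → ∃ lam' nu' : Set P, IsLowerSet lam' ∧ IsLowerSet nu' ∧
          lam' ⊆ nu' ∧ nu' \ lam' = ((nu \ lam) ∪ {x}) \ {c k} ∧
          (nu' \ lam').ncard = (nu \ lam).ncard) := by
  classical
  -- in a finite poset, a < b yields a cover a ⋖ y with y ≤ b
  have hcov : ∀ a b : P, a < b → ∃ y, a ⋖ y ∧ y ≤ b := by
    intro a b hab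
    obtain ⟨m, hm, hmin⟩ := (Finite.to_wellFoundedLT (α := P)).wf.has_min
      {y : P | a < y ∧ y ≤ b} ⟨b, hab, le_rfl⟩
    exact ⟨m, ⟨hm.1, fun z hz hzm => hmin z ⟨hz, hzm.le.trans hm.2⟩ hzm⟩, hm.2⟩
  obtain ⟨y0, hy0S, hxy0⟩ := hxbelow
  have hxnu : x ∈ nu := hnu hxy0.le hy0S.1
  have hxlam : x ∈ lam := by
    by_contra h; exact hx ⟨hxnu, h⟩
  have hlex : ∀ a ∈ nu \ lam, ¬ a ≤ x := fun a ha h => ha.2 (hlam h hxlam)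
  have hstep_lt : ∀ i < k, c i < c (i + 1) := fun i hi => ((hstep i hi).2.1).lt
  have hcm : ∀ a b : ℕ, a < b → b ≤ k → c a < c b := by
    intro a b hab hbk
    induction b with
    | zero => omega
    | succ n ih =>
      rcases Nat.lt_succ_iff_lt_or_eq.mp hab with h | h
      · exact (ih h (by omega)).trans (hstep_lt n (by omega))
      · subst h; exact hstep_lt a (by omega)
  have hcle : ∀ a b : ℕ, a ≤ b → b ≤ k → c a ≤ c b := by
    intro a b hab hbk
    rcases eq_or_lt_of_le hab with h | h
    · subst h; exact le_rfl
    · exact (hcm a b h hbk).le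
  have hcin : ∀ i, 1 ≤ i → i ≤ k → c i ∈ nu \ lam := by
    intro i h1 hk2
    obtain ⟨i', rfl⟩ : ∃ i', i = i' + 1 := ⟨i - 1, by omega⟩
    exact (hstep i' (by omega)).1
  have hcinj : ∀ a b : ℕ, a ≤ k → b ≤ k → c a = c b → a = b := by
    intro a b ha hb h
    rcases lt_trichotomy a b with h' | h' | h'
    · exact absurd h (hcm a b h' hb).ne
    · exact h'
    · exact absurd h.symm (hcm b a h' ha).ne
  have hkey : ∀ a < k, ∀ w ∈ nu \ lam, c a < w → T (c (a + 1)) ≤ T w := by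
    intro a hak w hwS hlt
    obtain ⟨y, hcovy, hyw⟩ := hcov _ _ hlt
    have hyS : y ∈ nu \ lam := by
      rcases Nat.eq_zero_or_pos a with rfl | ha
      · rw [hc0] at hcovy
        rcases hxmax y hcovy.lt with h | h
        · exact h
        · rcases eq_or_lt_of_le hyw with h' | h'
          · exact h' ▸ hwS
          · exact absurd ⟨w, hwS, h'⟩ h
      · have hcaS := hcin a ha (le_of_lt hak)
        exact ⟨hnu hyw hwS.1, fun hy => hcaS.2 (hlam hcovy.lt.le hy)⟩
    have h1 : T (c (a + 1)) ≤ T y := (hstep a hak).2.2 y hyS hcovy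
    have h2 : T y ≤ T w := by
      rcases eq_or_lt_of_le hyw with h | h
      · exact h ▸ le_rfl
      · exact (hmono y hyS w hwS h).le
    exact h1.trans h2
  have hk1 : 1 ≤ k := by
    by_contra h
    have hk0 : k = 0 := by omega
    obtain ⟨y, hcovy, hyw⟩ := hcov x y0 hxy0
    have hyS : y ∈ nu \ lam := by
      rcases hxmax y hcovy.lt with h' | h' 
      · exact h'
      · rcases eq_or_lt_of_le hyw with h'' | h''
        · exact h'' ▸ hy0S
        · exact absurd ⟨y0, hy0S, h''⟩ h'
    exact hstop y (by rw [hk0, hc0]; exact hcovy) hyS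
  intro j hj
  let Tj : P → ℕ := fun z =>
    if h : ∃ i, i < j ∧ z = c i then T (c (Classical.choose h + 1)) else T z
  have hTjOn : ∀ i < j, Tj (c i) = T (c (i + 1)) := by
    intro i hi
    have h : ∃ i', i' < j ∧ c i = c i' := ⟨i, hi, rfl⟩
    obtain ⟨h1, h2⟩ := Classical.choose_spec h
    have heq : Classical.choose h = i := hcinj _ _ (by omega) (by omega) h2.symm
    show (if h : ∃ i', i' < j ∧ c i = c i' then T (c (Classical.choose h + 1))
      else T (c i)) = _
    rw [dif_pos h, heq]
  have hTjOff : ∀ z, (¬∃ i, i < j ∧ z = c i) → Tj z = T z := by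
    intro z h
    show (if h : ∃ i, i < j ∧ z = c i then T (c (Classical.choose h + 1))
      else T z) = T z
    rw [dif_neg h]
  refine ⟨Tj, hTjOn, ?_, ?_, ?_⟩
  · intro z hz
    exact hTjOff z fun ⟨i, hi, he⟩ => hz i hi he
  · -- order preservation
    have hoff : ∀ u, u ∈ ((nu \ lam) ∪ {x}) \ {c j} → (¬∃ i, i < j ∧ u = c i) →
        u ∈ nu \ lam := by
      intro u hu hup
      rcases hu.1 with h | h
      · exact h
      · exfalso
        have hux : u = x := h
        rcases Nat.eq_zero_or_pos j with rfl | hj0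
        · exact hu.2 (Set.mem_singleton_iff.mpr (by rw [hux, hc0]))
        · exact hup ⟨0, hj0, by rw [hux, hc0]⟩
    intro z hz w hw hzw
    by_cases hzp : ∃ i, i < j ∧ z = c i
    · obtain ⟨a, ha, rfl⟩ := hzp
      by_cases hwp : ∃ i, i < j ∧ w = c i
      · obtain ⟨b, hb, rfl⟩ := hwp
        rw [hTjOn a ha, hTjOn b hb]
        have hab : a < b := by
          by_contra h
          exact absurd hzw (hcle b a (by omega) (by omega)).not_gt
        exact hmono _ (hcin (a + 1) (by omega) (by omega))
          _ (hcin (b + 1) (by omega) (by omega)) (hcm (a + 1) (b + 1) (by omega) (by omega))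
      · rw [hTjOn a ha, hTjOff w hwp]
        have hwS : w ∈ nu \ lam := hoff w hw hwp
        have hle : T (c (a + 1)) ≤ T w := hkey a (by omega) w hwS hzw
        have hne : w ≠ c (a + 1) := by
          intro h
          rcases Nat.lt_or_ge (a + 1) j with h1 | h1
          · exact hwp ⟨a + 1, h1, h⟩
          · have hje : a + 1 = j := by omega
            exact hw.2 (Set.mem_singleton_iff.mpr (by rw [h, hje]))
        exact lt_of_le_of_ne hle fun he =>
          hne (hinj hwS (hcin (a + 1) (by omega) (by omega)) he.symm)
    · by_cases hwp : ∃ i, i < j ∧ w = c i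
      · obtain ⟨b, hb, rfl⟩ := hwp
        rw [hTjOff z hzp, hTjOn b hb]
        exact hmono z (hoff z hz hzp) _ (hcin (b + 1) (by omega) (by omega))
          (hzw.trans (hstep_lt b (by omega)))
      · rw [hTjOff z hzp, hTjOff w hwp]
        exact hmono z (hoff z hz hzp) w (hoff w hw hwp) hzw
  · -- skew shape at the end
    intro _
    set D : Set P := ((nu \ lam) ∪ {x}) \ {c k} with hD
    have hckS : c k ∈ nu \ lam := hcin k hk1 le_rfl
    have hconv : ∀ a b d : P, a ∈ D → d ∈ D → a ≤ b → b ≤ d → b ∈ D := by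
      intro a b d haD hdD hab hbd
      constructor
      · rcases hdD.1 with hdS | hdx
        · by_cases hbx : b = x
          · exact Or.inr hbx
          · left
            refine ⟨hnu hbd hdS.1, ?_⟩
            intro hbl
            rcases haD.1 with haS | hax
            · exact haS.2 (hlam hab hbl)
            · have hax' : a = x := hax
              have hxb : x < b := lt_of_le_of_ne (hax' ▸ hab) fun h => hbx h.symm
              rcases hxmax b hxb with h | h
              · exact h.2 hbl
              · rcases eq_or_lt_of_le hbd with h' | h'
                · exact (h' ▸ hdS).2 hbl
                · exact h ⟨d, hdS, h'⟩
        · have hdx' : d = x := hdx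
          rcases haD.1 with haS | hax
          · exact absurd (hab.trans (hbd.trans hdx'.le)) (hlex a haS)
          · have hax' : a = x := hax
            exact Or.inr (le_antisymm (hbd.trans hdx'.le) (hax' ▸ hab))
      · intro hbck
        have hbck' : b = c k := hbck
        have hckd : c k < d := by
          rcases eq_or_lt_of_le hbd with h | h
          · exact absurd (Set.mem_singleton_iff.mpr (by rw [← h]; exact hbck')) hdD.2
          · exact hbck' ▸ h
        obtain ⟨y, hcy, hyd⟩ := hcov _ _ hckd
        refine hstop y hcy ?_
        rcases hdD.1 with hdS | hdx
        · exact ⟨hnu hyd hdS.1, fun hyl => hckS.2 (hlam hcy.lt.le hyl)⟩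
        · have hdx' : d = x := hdx
          exact absurd (hckd.le.trans hdx'.le) (hlex _ hckS)
    have hDN : D ⊆ {z : P | ∃ d ∈ D, z ≤ d} := fun z hz => ⟨z, hz, le_rfl⟩
    refine ⟨{z : P | ∃ d ∈ D, z ≤ d} \ D, {z : P | ∃ d ∈ D, z ≤ d}, ?_, ?_,
      Set.diff_subset, ?_, ?_⟩
    · intro a b hba ha
      refine ⟨?_, ?_⟩
      · obtain ⟨d, hd, had⟩ := ha.1
        exact ⟨d, hd, hba.trans had⟩
      · intro hbD
        obtain ⟨d, hd, had⟩ := ha.1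
        exact ha.2 (hconv b a d hbD hd hba had)
    · intro a b hba ha
      obtain ⟨d, hd, had⟩ := ha
      exact ⟨d, hd, hba.trans had⟩
    · exact Set.diff_diff_cancel_left hDN
    · rw [Set.diff_diff_cancel_left hDN, hD, Set.union_singleton,
        Set.ncard_diff_singleton_of_mem (Set.mem_insert_iff.mpr (Or.inr hckS)),
        Set.ncard_insert_of_notMem hx (Set.toFinite _)]
      omega
end

section
/- Let W be a Weyl group, β a cominuscule simple root, and w ∈ W Grassmannian at β. Then for any positive root α with ℓ(w s_α) = ℓ(w) + 1 and the coefficient n_{αβ} of β in α nonzero, it holds that n_{αβ} = 1 and w s_α is again Grassmannian at β. -/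
/-!
Positive roots have nonnegative coordinates, so a sum of two of them is never a nonpositive
multiple of a third. Applied to `u γ - u (s_α γ) = f γ • u α`, this shows that when `u α` is
negative, the involution `γ ↦ (s_α γ if that is positive, else γ)` of the positive roots maps the
inversion set of `u s_α` into that of `u`. Hence `ℓ(w s_α) > ℓ(w)` forces `w α > 0`. Now let
`w s_α` invert a simple root `b i ≠ β`. If `s_α (b i) > 0`, comparing `β`-coordinates gives
`f (b i) ≤ 0`, and `w (b i) - w (s_α (b i)) = f (b i) • w α` is impossible. Otherwise the same
involution, run for `u = w s_α`, maps the inversion set of `w` into that of `w s_α` while missing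
its fixed points `α` and `b i`, so `ℓ(w s_α) ≥ ℓ(w) + 2`.
-/

open Module Set

section PositiveCone

variable {V ι : Type*} [AddCommGroup V] [Module ℝ V]

structure HasPositiveCoords (b : Basis ι ℝ V) (P : Set V) : Prop where
  nonneg : ∀ γ ∈ P, ∀ i, 0 ≤ b.repr γ i
  zero_notMem : (0 : V) ∉ P

variable {b : Basis ι ℝ V} {P : Set V}

theorem HasPositiveCoords.add_ne_smul (hP : HasPositiveCoords b P) {u v x : V}
    (hu : u ∈ P) (hv : v ∈ P) (hx : x ∈ P) {t : ℝ} (ht : t ≤ 0) : u + v ≠ t • x := by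
  intro h
  have hu0 : b.repr u = 0 := by
    ext i
    have hi := congrArg (fun z => b.repr z i) h
    simp only [map_add, map_smul, Finsupp.add_apply, Finsupp.smul_apply, smul_eq_mul] at hi
    rw [Finsupp.zero_apply]
    nlinarith [hP.nonneg u hu i, hP.nonneg v hv i, hP.nonneg x hx i]
  exact hP.zero_notMem (b.repr.map_eq_zero_iff.mp hu0 ▸ hu)

theorem HasPositiveCoords.neg_notMem (hP : HasPositiveCoords b P) {x : V} (hx : x ∈ P) :
    -x ∉ P := fun h => hP.add_ne_smul hx h hx le_rfl (by simp)

end PositiveCone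

section Reflection

variable {V : Type*} [AddCommGroup V] [Module ℝ V] {α : V} {f : Dual ℝ V} (hf : f α = 2)

theorem apply_add_neg_apply_reflection {F : Type*} [FunLike F V V] [LinearMapClass F ℝ V V]
    (u : F) (γ : V) : u γ + -u (reflection hf γ) = f γ • u α := by
  rw [reflection_apply, map_sub, map_smul]
  abel

variable {ι : Type*} {b : Basis ι ℝ V} {P : Set V}

theorem HasPositiveCoords.pos_of_neg_reflection_mem (hP : HasPositiveCoords b P) (hα : α ∈ P)
    {γ : V} (hγ : γ ∈ P) (hsγ : -reflection hf γ ∈ P) : 0 < f γ := by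
  by_contra! ht
  exact hP.add_ne_smul hγ hsγ hα ht (apply_add_neg_apply_reflection hf LinearMap.id γ)

end Reflection

section Fold

variable {X : Type*} (s : X → X) (P : Set X)

open Classical in
noncomputable def foldInto (γ : X) : X := if s γ ∈ P then s γ else γ

variable {s P}

theorem foldInto_of_mem {γ : X} (h : s γ ∈ P) : foldInto s P γ = s γ := if_pos h

theorem foldInto_of_notMem {γ : X} (h : s γ ∉ P) : foldInto s P γ = γ := if_neg h

theorem injOn_foldInto (hs : Function.Involutive s) : InjOn (foldInto s P) P := by
  intro x hx y hy h
  by_cases hsx : s x ∈ P <;> by_cases hsy : s y ∈ P <;>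
    simp only [foldInto_of_mem, foldInto_of_notMem, hsx, hsy, not_false_eq_true] at h
  · exact hs.injective h
  · exact absurd (by rw [← h, hs x]; exact hx) hsy
  · exact absurd (by rw [h, hs y]; exact hy) hsx
  · exact h

end Fold

theorem ncard_add_ncard_le_of_injOn {X : Type*} {φ : X → X} {A B S : Set X}
    (hinj : InjOn φ (A ∪ S)) (hmaps : MapsTo φ A B) (hSB : S ⊆ B) (hfix : ∀ x ∈ S, φ x = x)
    (hAS : Disjoint A S) (hB : B.Finite) : A.ncard + S.ncard ≤ B.ncard := by
  have hdisj : Disjoint (φ '' A) S := by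
    rw [Set.disjoint_left]
    rintro _ ⟨a, ha, rfl⟩ hS
    have : a = φ a := hinj (Or.inl ha) (Or.inr hS) (hfix _ hS).symm
    exact Set.disjoint_left.mp hAS ha (this ▸ hS)
  calc A.ncard + S.ncard = (φ '' A ∪ S).ncard := by
        rw [ncard_union_eq hdisj (hB.subset hmaps.image_subset) (hB.subset hSB),
          (hinj.mono subset_union_left).ncard_image]
    _ ≤ B.ncard := ncard_le_ncard (union_subset hmaps.image_subset hSB) hB

section Inversions

variable {V ι : Type*} [AddCommGroup V] [Module ℝ V] {b : Basis ι ℝ V} {P : Set V}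

def inversionSet (P : Set V) (u : V → V) : Set V := {γ | γ ∈ P ∧ -u γ ∈ P}

def PreservesUpToSign (P : Set V) (u : V → V) : Prop := ∀ γ ∈ P, u γ ∈ P ∨ -u γ ∈ P

theorem PreservesUpToSign.mul {u v : V ≃ₗ[ℝ] V} (hu : PreservesUpToSign P u)
    (hv : PreservesUpToSign P v) : PreservesUpToSign P ⇑(u * v) := by
  intro γ hγ
  rcases hv γ hγ with h | h
  · exact hu _ h
  · rcases hu _ h with h' | h' <;> rw [map_neg] at h'
    · exact Or.inr h'
    · exact Or.inl (neg_neg (u (v γ)) ▸ h')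

variable {α : V} {f : Dual ℝ V} (hf : f α = 2)

theorem HasPositiveCoords.mapsTo_foldInto_inversionSet (hP : HasPositiveCoords b P) (hα : α ∈ P)
    (hsP : PreservesUpToSign P (reflection hf)) {u : V ≃ₗ[ℝ] V} (hu : PreservesUpToSign P u)
    (huα : -u α ∈ P) :
    MapsTo (foldInto (reflection hf) P) (inversionSet P ⇑(u * reflection hf))
      (inversionSet P u) := by
  rintro γ ⟨hγ, hsγ⟩
  by_cases h : reflection hf γ ∈ P
  · rw [foldInto_of_mem h]
    exact ⟨h, hsγ⟩
  · rw [foldInto_of_notMem h]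
    refine ⟨hγ, (hu γ hγ).resolve_left fun huγ => ?_⟩
    have hfγ := hP.pos_of_neg_reflection_mem hf hα hγ ((hsP γ hγ).resolve_left h)
    refine hP.add_ne_smul huγ hsγ huα (neg_nonpos.2 hfγ.le) ?_
    rw [LinearEquiv.mul_apply, apply_add_neg_apply_reflection, neg_smul, smul_neg, neg_neg]

theorem HasPositiveCoords.mem_of_ncard_inversionSet_lt (hP : HasPositiveCoords b P)
    (hfin : P.Finite) (hα : α ∈ P) (hsP : PreservesUpToSign P (reflection hf))
    {u : V ≃ₗ[ℝ] V} (hu : PreservesUpToSign P u)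
    (hlt : (inversionSet P u).ncard < (inversionSet P ⇑(u * reflection hf)).ncard) :
    u α ∈ P := by
  by_contra h
  refine hlt.not_ge (ncard_le_ncard_of_injOn _
    (hP.mapsTo_foldInto_inversionSet hf hα hsP hu ((hu α hα).resolve_left h)) ?_
    (hfin.subset fun _ hγ => hγ.1))
  exact (injOn_foldInto (involutive_reflection hf)).mono fun _ hγ => hγ.1

theorem HasPositiveCoords.ncard_inversionSet_add_two_le (hP : HasPositiveCoords b P)
    (hfin : P.Finite) (hα : α ∈ P) (hsP : PreservesUpToSign P (reflection hf))
    {u : V ≃ₗ[ℝ] V} (hu : PreservesUpToSign P u) (huα : u α ∈ P)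
    {δ : V} (hδ : δ ∈ P) (hδα : δ ≠ α) (hsδ : reflection hf δ ∉ P) (huδ : u δ ∈ P)
    (hδinv : -u (reflection hf δ) ∈ P) :
    (inversionSet P u).ncard + 2 ≤ (inversionSet P ⇑(u * reflection hf)).ncard := by
  have hmaps := hP.mapsTo_foldInto_inversionSet hf hα hsP (hu.mul hsP)
    (u := u * reflection hf) (by simpa using huα)
  have hsq : u * reflection hf * reflection hf = u := by
    simpa using mul_inv_cancel_right u (reflection hf)
  rw [hsq] at hmaps
  rw [← ncard_pair hδα.symm]
  refine ncard_add_ncard_le_of_injOn ?_ hmaps ?_ ?_ ?_ (hfin.subset fun _ hγ => hγ.1)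
  · refine (injOn_foldInto (involutive_reflection hf)).mono ?_
    rintro γ (hγ | rfl | rfl)
    exacts [hγ.1, hα, hδ]
  · rintro γ (rfl | rfl)
    exacts [⟨hα, by simpa using huα⟩, ⟨hδ, hδinv⟩]
  · rintro γ (rfl | rfl)
    exacts [foldInto_of_notMem (by simpa using hP.neg_notMem hα), foldInto_of_notMem hsδ]
  · rw [Set.disjoint_right]
    rintro γ (rfl | rfl) hγ
    exacts [hP.neg_notMem huα hγ.2, hP.neg_notMem huδ hγ.2]

end Inversions

theorem stmt18_general {V ι : Type*} [AddCommGroup V] [Module ℝ V]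
    (b : Module.Basis ι ℝ V) (Pos : Set V) (hfin : Pos.Finite)
    (hΔ : ∀ i, b i ∈ Pos)
    (hdisj : ∀ α ∈ Pos, -α ∉ Pos)
    (i₀ : ι)
    (hcom : ∀ α ∈ Pos, b.repr α i₀ ≤ 1)
    (hint : ∀ α ∈ Pos, ∀ i, ∃ m : ℕ, b.repr α i = m)
    (w : V ≃ₗ[ℝ] V) (hw : ∀ α ∈ Pos, w α ∈ Pos ∨ -(w α) ∈ Pos)
    (hGrass : ∀ i, i ≠ i₀ → -(w (b i)) ∉ Pos)
    (α : V) (hα : α ∈ Pos)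
    (sα : V ≃ₗ[ℝ] V)
    (hsα : ∃ f : V →ₗ[ℝ] ℝ, f α = 2 ∧ ∀ v, sα v = v - f v • α)
    (hsroot : ∀ γ ∈ Pos, sα γ ∈ Pos ∨ -(sα γ) ∈ Pos)
    (hlen : ({γ | γ ∈ Pos ∧ -((w * sα) γ) ∈ Pos}).ncard
        = ({γ | γ ∈ Pos ∧ -(w γ) ∈ Pos}).ncard + 1)
    (hnz : b.repr α i₀ ≠ 0) :
    b.repr α i₀ = 1 ∧ ∀ i, i ≠ i₀ → -((w * sα) (b i)) ∉ Pos := by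
  obtain ⟨f, hfα, hsv⟩ := hsα
  obtain rfl : sα = reflection (f := f) hfα :=
    LinearEquiv.ext fun v => (hsv v).trans (reflection_apply (y := v) hfα).symm
  have hP : HasPositiveCoords b Pos :=
    ⟨fun γ hγ i => (hint γ hγ i).elim fun m hm => hm ▸ m.cast_nonneg,
      fun h0 => hdisj 0 h0 (by simpa using h0)⟩
  have hcα : b.repr α i₀ = 1 := by
    obtain ⟨m, hm⟩ := hint α hα i₀
    have h1 := hcom α hα
    rw [hm] at hnz h1 ⊢
    norm_cast at hnz h1 ⊢
    omega
  change (inversionSet Pos ⇑(w * reflection hfα)).ncard = (inversionSet Pos w).ncard + 1 at hlen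
  have hwα : w α ∈ Pos := hP.mem_of_ncard_inversionSet_lt hfα hfin hα hsroot hw (by omega)
  refine ⟨hcα, fun i hi hinv => ?_⟩
  have hwb : w (b i) ∈ Pos := (hw _ (hΔ i)).resolve_right (hGrass i hi)
  by_cases hsb : reflection hfα (b i) ∈ Pos
  · have hfb : f (b i) ≤ 0 := by
      have := hP.nonneg _ hsb i₀
      simp [reflection_apply, hcα, Finsupp.single_eq_of_ne' hi] at this
      linarith
    exact hP.add_ne_smul hwb hinv hwα hfb (apply_add_neg_apply_reflection hfα w (b i))
  · have hbα : b i ≠ α := fun h => hnz (by simp [← h, Finsupp.single_eq_of_ne' hi])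
    have := hP.ncard_inversionSet_add_two_le hfα hfin hα hsroot hw hwα (hΔ i) hbα hsb hwb hinv
    omega

/-- Monk–Chevalley lemma in the cominuscule case.  Let `β = b i₀` be a
cominuscule simple root (every positive root is crystallographic, with
`β`-coefficient at most `1`), and let `w` be Grassmannian at `β` (its only
possible descent is `β`).  If `α` is a positive root with
`ℓ(w s_α) = ℓ(w) + 1` (lengths measured by inversion sets
`I(u) = {γ ∈ Pos : u γ ∈ -Pos}`, `s_α` the reflection in `α`) and the
coefficient `n_{αβ}` of `β` in `α` is nonzero, then `n_{αβ} = 1` and `w s_α`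
is again Grassmannian at `β`. -/
theorem stmt18 {V ι : Type*} [AddCommGroup V] [Module ℝ V] [Fintype ι]
    (b : Module.Basis ι ℝ V) (Pos : Set V) (hfin : Pos.Finite)
    (hΔ : ∀ i, b i ∈ Pos)
    (hdisj : ∀ α ∈ Pos, -α ∉ Pos)
    (i₀ : ι)
    (hcom : ∀ α ∈ Pos, b.repr α i₀ ≤ 1)
    (hint : ∀ α ∈ Pos, ∀ i, ∃ m : ℕ, b.repr α i = m)
    (w : V ≃ₗ[ℝ] V) (hw : ∀ α ∈ Pos, w α ∈ Pos ∨ -(w α) ∈ Pos)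
    (hGrass : ∀ i, i ≠ i₀ → -(w (b i)) ∉ Pos)
    (α : V) (hα : α ∈ Pos)
    (sα : V ≃ₗ[ℝ] V)
    (hsα : ∃ f : V →ₗ[ℝ] ℝ, f α = 2 ∧ ∀ v, sα v = v - f v • α)
    (hsroot : ∀ γ ∈ Pos, sα γ ∈ Pos ∨ -(sα γ) ∈ Pos)
    (hlen : ({γ | γ ∈ Pos ∧ -((w * sα) γ) ∈ Pos}).ncard
        = ({γ | γ ∈ Pos ∧ -(w γ) ∈ Pos}).ncard + 1)
    (hnz : b.repr α i₀ ≠ 0) :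
    b.repr α i₀ = 1 ∧ ∀ i, i ≠ i₀ → -((w * sα) (b i)) ∉ Pos :=
  stmt18_general b Pos hfin hΔ hdisj i₀ hcom hint w hw hGrass α hα sα hsα hsroot hlen hnz
end
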